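/- Let T be a rooted tree with heavy path decomposition, and let P = (l,r) and Q = (s,t) be intersecting paths in T that share no light edge. Then all common vertices of P and Q lie in a single heavy path H, and moreover the lowest common ancestor of the endpoints of P or the lowest common ancestor of the endpoints of Q lies in V(P) ∩ V(Q) ∩ V(H). -/

import Mathlib

/-!
Let `u = lca l r` and `v = lca s t`. Every common vertex `x` of the two paths lies below both
`u` and `v`, so these are comparable; by symmetry `v` is an ancestor of `u`, hence `u` lies on
both paths. Walking up from any common vertex `w` to `u` stays inside both paths and never
passes through `u` or `v` before arriving, so every edge of that walk is shared, hence heavy: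
`w` lies on the heavy path of `u`.
-/

open Classical

/-- A rooted tree on `n` nodes, given by a parent function. -/
structure RTree (n : ℕ) where
  parent : Fin n → Fin n
  root : Fin n
  parent_root : parent root = root
  reaches_root : ∀ v, ∃ k, parent^[k] v = root

namespace RTree

variable {n : ℕ}

/-- `a` is an ancestor of `v` (possibly `a = v`). -/
def isAncestor (T : RTree n) (a v : Fin n) : Prop := ∃ k, T.parent^[k] v = a

/-- The set of nodes in the subtree rooted at `a`. -/
noncomputable def subtree (T : RTree n) (a : Fin n) : Finset (Fin n) :=
  Finset.univ.filter fun v => T.isAncestor a v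

/-- Distance from `v` to the root. -/
noncomputable def depth (T : RTree n) (v : Fin n) : ℕ := Nat.find (T.reaches_root v)

/-- `v` is a child of `u`. -/
def isChild (T : RTree n) (v u : Fin n) : Prop := v ≠ T.root ∧ T.parent v = u

/-- `heavy` assigns to each internal node a child of maximum subtree size (heavy child). -/
def IsHeavyChoice (T : RTree n) (heavy : Fin n → Fin n) : Prop :=
  ∀ u : Fin n, (∃ c, T.isChild c u) →
    T.isChild (heavy u) u ∧
      ∀ c, T.isChild c u → (T.subtree c).card ≤ (T.subtree (heavy u)).card

/-- The edge from `v` to its parent is a light edge. -/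
def isLightTop (T : RTree n) (heavy : Fin n → Fin n) (v : Fin n) : Prop :=
  v ≠ T.root ∧ heavy (T.parent v) ≠ v

/-- `{x, y}` is a light edge of `T`. -/
def isLightEdge (T : RTree n) (heavy : Fin n → Fin n) (x y : Fin n) : Prop :=
  (T.isChild x y ∧ heavy y ≠ x) ∨ (T.isChild y x ∧ heavy x ≠ y)

lemma parent_fix_eq_root (T : RTree n) (a : Fin n) (h : T.parent a = a) : a = T.root := by
  obtain ⟨k, hk⟩ := T.reaches_root a
  have h2 : T.parent^[k] a = a := Function.iterate_fixed h k
  rw [h2] at hk; exact hk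

/-- The graph on the nodes of `T` whose edges are exactly the heavy edges. -/
def heavyGraph (T : RTree n) (heavy : Fin n → Fin n) : SimpleGraph (Fin n) where
  Adj x y := (T.isChild x y ∧ heavy y = x) ∨ (T.isChild y x ∧ heavy x = y)
  symm := ⟨by intro x y h; tauto⟩
  loopless := ⟨by
    intro x h
    rcases h with ⟨⟨hne, hp⟩, _⟩ | ⟨⟨hne, hp⟩, _⟩ <;> exact hne (T.parent_fix_eq_root x hp)⟩

/-- `a` and `b` lie on the same heavy path of the heavy path decomposition. -/
def sameHP (T : RTree n) (heavy : Fin n → Fin n) (a b : Fin n) : Prop :=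
  (T.heavyGraph heavy).Reachable a b

lemma exists_common_ancestor (T : RTree n) (a b : Fin n) :
    ∃ m, T.isAncestor (T.parent^[m] a) b := by
  refine ⟨T.depth a, T.depth b, ?_⟩
  have h1 : T.parent^[T.depth b] b = T.root := Nat.find_spec (T.reaches_root b)
  have h2 : T.parent^[T.depth a] a = T.root := Nat.find_spec (T.reaches_root a)
  rw [h1, h2]

/-- The lowest common ancestor of `a` and `b`. -/
noncomputable def lca (T : RTree n) (a b : Fin n) : Fin n :=
  T.parent^[Nat.find (T.exists_common_ancestor a b)] a

/-- The vertex set of the unique simple path between `a` and `b` in `T`. -/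
def pathSet (T : RTree n) (a b : Fin n) : Set (Fin n) :=
  {w | (T.isAncestor w a ∨ T.isAncestor w b) ∧ T.isAncestor (T.lca a b) w}

lemma self_mem_subtree (T : RTree n) (a : Fin n) : a ∈ T.subtree a := by
  simp only [subtree, Finset.mem_filter, Finset.mem_univ, true_and]
  exact ⟨0, rfl⟩

/-- The largest pre-order label in the subtree rooted at `a`. -/
noncomputable def rmostLeaf (T : RTree n) (a : Fin n) : Fin n :=
  (T.subtree a).max' ⟨a, T.self_mem_subtree a⟩

/-- The labels `1..n` of `T` form a pre-order (DFS) labelling. -/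
def IsPreorder (T : RTree n) : Prop :=
  (∀ v, v ≠ T.root → T.parent v < v) ∧
    (∀ u v w : Fin n, u < v → v < w → T.isAncestor u w → T.isAncestor u v)

/-- Number of light edges on the path from the root to `v`
(the level of the heavy path of `v` in the heavy path tree). -/
noncomputable def lightDepth (T : RTree n) (heavy : Fin n → Fin n) (v : Fin n) : ℕ :=
  ((Finset.range (T.depth v)).filter fun k => T.isLightTop heavy (T.parent^[k] v)).card

end RTree

namespace RTree

variable {n : ℕ} (T : RTree n)

lemma iterate_parent_root (k : ℕ) : T.parent^[k] T.root = T.root :=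
  Function.iterate_fixed T.parent_root k

lemma isAncestor_refl (a : Fin n) : T.isAncestor a a := ⟨0, rfl⟩

variable {T}

lemma isAncestor.trans {a b c : Fin n} (hab : T.isAncestor a b) (hbc : T.isAncestor b c) :
    T.isAncestor a c := by
  obtain ⟨k, rfl⟩ := hab
  obtain ⟨m, rfl⟩ := hbc
  exact ⟨k + m, Function.iterate_add_apply _ _ _ _⟩

lemma eq_root_of_iterate_parent_eq_self {u : Fin n} {c : ℕ} (hc : 0 < c)
    (h : T.parent^[c] u = u) : u = T.root := by
  obtain ⟨d, hd⟩ := T.reaches_root u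
  -- `c * d ≥ d` steps up from `u` both return to `u` and pass through the root
  calc u = T.parent^[c * d] u := by rw [Function.iterate_mul, Function.iterate_fixed h]
    _ = T.parent^[c * d - d] (T.parent^[d] u) := by
        rw [← Function.iterate_add_apply, Nat.sub_add_cancel (Nat.le_mul_of_pos_left d hc)]
    _ = T.root := by rw [hd, T.iterate_parent_root]

lemma isAncestor_antisymm {a b : Fin n} (hab : T.isAncestor a b) (hba : T.isAncestor b a) :
    a = b := by
  obtain ⟨k, rfl⟩ := hab
  obtain ⟨m, hm⟩ := hba
  rcases Nat.eq_zero_or_pos (m + k) with hzero | hpos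
  · rw [show k = 0 by omega, Function.iterate_zero_apply]
  · have hb : b = T.root :=
      eq_root_of_iterate_parent_eq_self hpos (by rw [Function.iterate_add_apply, hm])
    rw [hb, T.iterate_parent_root]

lemma isAncestor_total_of_isAncestor {u v x : Fin n} (hu : T.isAncestor u x)
    (hv : T.isAncestor v x) : T.isAncestor u v ∨ T.isAncestor v u := by
  obtain ⟨i, rfl⟩ := hu
  obtain ⟨j, rfl⟩ := hv
  rcases le_total i j with hij | hji
  · exact Or.inr ⟨j - i, by rw [← Function.iterate_add_apply, Nat.sub_add_cancel hij]⟩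
  · exact Or.inl ⟨i - j, by rw [← Function.iterate_add_apply, Nat.sub_add_cancel hji]⟩

lemma lca_mem_pathSet (a b : Fin n) : T.lca a b ∈ T.pathSet a b :=
  ⟨Or.inl ⟨_, rfl⟩, T.isAncestor_refl _⟩

lemma mem_pathSet_of_isAncestor {a b w z : Fin n} (hw : w ∈ T.pathSet a b)
    (hzw : T.isAncestor z w) (hz : T.isAncestor (T.lca a b) z) : z ∈ T.pathSet a b :=
  ⟨hw.1.imp hzw.trans hzw.trans, hz⟩

lemma lca_mem_pathSet_of_isAncestor_lca {l r s t x : Fin n}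
    (hx : x ∈ T.pathSet l r ∩ T.pathSet s t)
    (hlca : T.isAncestor (T.lca s t) (T.lca l r)) : T.lca l r ∈ T.pathSet s t :=
  mem_pathSet_of_isAncestor hx.2 hx.1.2 hlca

variable {heavy : Fin n → Fin n}

lemma sameHP_parent_of_not_isLightTop {z : Fin n} (hz : ¬ T.isLightTop heavy z) :
    T.sameHP heavy z (T.parent z) := by
  by_cases hroot : z = T.root
  · rw [hroot, T.parent_root]
    exact SimpleGraph.Reachable.refl _
  · have hheavy : heavy (T.parent z) = z := by
      by_contra hne
      exact hz ⟨hroot, hne⟩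
    exact SimpleGraph.Adj.reachable (G := T.heavyGraph heavy) (Or.inl ⟨⟨hroot, rfl⟩, hheavy⟩)

lemma sameHP_iterate_parent {w : Fin n} {k : ℕ}
    (hk : ∀ i < k, ¬ T.isLightTop heavy (T.parent^[i] w)) :
    T.sameHP heavy w (T.parent^[k] w) := by
  induction k with
  | zero => exact SimpleGraph.Reachable.refl w
  | succ k ih =>
    rw [Function.iterate_succ_apply']
    exact (ih fun i hi => hk i (by omega)).trans
      (sameHP_parent_of_not_isLightTop (hk k (by omega)))

lemma pathSet_inter_subset_sameHP_lca {l r s t : Fin n}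
    (hlca : T.isAncestor (T.lca s t) (T.lca l r))
    (hnolight : ¬ ∃ x : Fin n, x ∈ T.pathSet l r ∧ x ≠ T.lca l r ∧
        x ∈ T.pathSet s t ∧ x ≠ T.lca s t ∧ T.isLightTop heavy x) :
    T.pathSet l r ∩ T.pathSet s t ⊆ {w | T.sameHP heavy (T.lca l r) w} := by
  intro w hw
  have hex : ∃ k, T.parent^[k] w = T.lca l r := hw.1.2
  have hk : T.parent^[Nat.find hex] w = T.lca l r := Nat.find_spec hex
  refine Set.mem_ofPred.2 (hk ▸ sameHP_iterate_parent fun i hi hlight => ?_).symm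
  have hzw : T.isAncestor (T.parent^[i] w) w := ⟨i, rfl⟩
  have huz : T.isAncestor (T.lca l r) (T.parent^[i] w) :=
    ⟨Nat.find hex - i, by rw [← Function.iterate_add_apply, Nat.sub_add_cancel hi.le, hk]⟩
  have hne_u : T.parent^[i] w ≠ T.lca l r := Nat.find_min hex hi
  refine hnolight ⟨_, mem_pathSet_of_isAncestor hw.1 hzw huz, hne_u,
    mem_pathSet_of_isAncestor hw.2 hzw (hlca.trans huz), fun hv => ?_, hlight⟩
  exact hne_u (hv.trans (isAncestor_antisymm (hv ▸ huz) hlca).symm)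

end RTree

theorem stmt15_general {n : ℕ} (T : RTree n) (heavy : Fin n → Fin n)
    (l r s t : Fin n)
    (hint : (T.pathSet l r ∩ T.pathSet s t).Nonempty)
    (hnolight : ¬ ∃ x : Fin n, x ∈ T.pathSet l r ∧ x ≠ T.lca l r ∧
        x ∈ T.pathSet s t ∧ x ≠ T.lca s t ∧ T.isLightTop heavy x) :
    ∃ h : Fin n,
      (T.pathSet l r ∩ T.pathSet s t) ⊆ {w | T.sameHP heavy h w} ∧
      (T.lca l r ∈ T.pathSet l r ∩ T.pathSet s t ∩ {w | T.sameHP heavy h w} ∨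
        T.lca s t ∈ T.pathSet l r ∩ T.pathSet s t ∩ {w | T.sameHP heavy h w}) := by
  wlog hlca : T.isAncestor (T.lca s t) (T.lca l r) generalizing l r s t
  · obtain ⟨x, hx⟩ := hint
    have hlca' := (RTree.isAncestor_total_of_isAncestor hx.1.2 hx.2.2).resolve_right hlca
    obtain ⟨h, hsub, hmem⟩ := this s t l r ⟨x, hx.symm⟩
      (fun ⟨y, hP, hu, hQ, hv, hy⟩ => hnolight ⟨y, hQ, hv, hP, hu, hy⟩) hlca'
    rw [Set.inter_comm (T.pathSet s t)] at hsub hmem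
    exact ⟨h, hsub, hmem.symm⟩
  obtain ⟨x, hx⟩ := hint
  have hsub := RTree.pathSet_inter_subset_sameHP_lca hlca hnolight
  have hu : T.lca l r ∈ T.pathSet l r ∩ T.pathSet s t :=
    ⟨RTree.lca_mem_pathSet l r, RTree.lca_mem_pathSet_of_isAncestor_lca hx hlca⟩
  exact ⟨T.lca l r, hsub, Or.inl ⟨hu, hsub hu⟩⟩

/-- let `P` (between `l, r`) and `Q` (between `s, t`) be intersecting paths that
share no light edge (an edge of a path joins a non-top vertex `x` of the path to its parent).
Then all common vertices lie in a single heavy path `H`, and `lca l r` or `lca s t` lies in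
`V(P) ∩ V(Q) ∩ V(H)`. -/
theorem stmt15 {n : ℕ} (T : RTree n) (heavy : Fin n → Fin n) (hh : T.IsHeavyChoice heavy)
    (l r s t : Fin n)
    (hint : (T.pathSet l r ∩ T.pathSet s t).Nonempty)
    (hnolight : ¬ ∃ x : Fin n, x ∈ T.pathSet l r ∧ x ≠ T.lca l r ∧
        x ∈ T.pathSet s t ∧ x ≠ T.lca s t ∧ T.isLightTop heavy x) :
    ∃ h : Fin n,
      (T.pathSet l r ∩ T.pathSet s t) ⊆ {w | T.sameHP heavy h w} ∧
      (T.lca l r ∈ T.pathSet l r ∩ T.pathSet s t ∩ {w | T.sameHP heavy h w} ∨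
        T.lca s t ∈ T.pathSet l r ∩ T.pathSet s t ∩ {w | T.sameHP heavy h w}) :=
  stmt15_general T heavy l r s t hint hnolight
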